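/- If (λ, y) is a solution of the four-variable system (S) with λ > 0, then y_n = min(ā_n − b_m + (m−3)λ, b_n − (n−1)λ) + y_1. -/
import Mathlib


open Finset

/-- The four-variable system (S), with variables `y1 = y_1`, `yn = y_n`,
`yn1 = y_{n+1}`, `ynm = y_{n+m}`. -/
def Ssol (n m : ℕ) (a : ℕ → ℝ) (lam y1 yn yn1 ynm : ℝ) : Prop :=
  yn = min ((1 - (a n + a (n + m))) - 2 * lam + y1 + yn1 - ynm)
      ((∑ i ∈ Finset.Icc 1 (n - 1), a i) - ((n : ℝ) - 1) * lam + y1) ∧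
  ynm = min ((1 - (a n + a (n + m))) - lam + y1 + yn1 - yn)
      ((∑ i ∈ Finset.Icc (n + 1) (n + m - 1), a i) - ((m : ℝ) - 1) * lam + yn1) ∧
  y1 = min (a n - lam + (yn + ynm) / 2)
      ((∑ i ∈ Finset.Icc 1 (n - 1), (1 - a i)) - ((n : ℝ) - 1) * lam + yn) ∧
  yn1 = min (a (n + m) - lam + (yn + ynm) / 2)
      ((∑ i ∈ Finset.Icc (n + 1) (n + m - 1), (1 - a i)) - ((m : ℝ) - 1) * lam + ynm)

theorem stmt13 (n m : ℕ) (hn : 2 ≤ n) (hm : 2 ≤ m) (a : ℕ → ℝ)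
    (ha : ∀ i : ℕ, 1 ≤ i → i ≤ n + m → 0 ≤ a i ∧ a i ≤ 1)
    (hprio : a n + a (n + m) ≤ 1)
    (lam y1 yn yn1 ynm : ℝ) (hlam : 0 < lam)
    (hS : Ssol n m a lam y1 yn yn1 ynm) :
    yn = min ((1 - (a n + a (n + m))) - (∑ i ∈ Finset.Icc (n + 1) (n + m - 1), a i)
        + ((m : ℝ) - 3) * lam)
      ((∑ i ∈ Finset.Icc 1 (n - 1), a i) - ((n : ℝ) - 1) * lam) + y1 := by
  obtain ⟨h1, h2, h3, h4⟩ := hS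
  rcases le_or_gt ((1 - (a n + a (n + m))) - lam + y1 + yn1 - yn)
      ((∑ i ∈ Finset.Icc (n + 1) (n + m - 1), a i) - ((m : ℝ) - 1) * lam + yn1) with h | h
  · exfalso
    rw [min_eq_left h] at h2
    have hle : yn ≤ (1 - (a n + a (n + m))) - 2 * lam + y1 + yn1 - ynm := by
      rw [h1]; exact min_le_left _ _
    rw [h2] at hle
    linarith
  · rw [min_eq_right h.le] at h2
    rw [h2] at h1
    rw [h1, ← min_add_add_right]
    congr 1 <;> ring
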